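/- Let P, Q ∈ ℝ^{n×n} be positive definite, A ∈ ℝ^{n×n}, and let S ∈ ℝ^{n×n} be positive semidefinite. Define G = P Aᵀ (A P Aᵀ + Q)⁻¹ and C = P − G (A P Aᵀ + Q) Gᵀ. Then C is positive definite and for all m, s, z ∈ ℝⁿ (with S positive definite so that f_n(·; s, S) is defined), ∫_{ℝⁿ} f_n(z; m + G(w − A m), C) · f_n(w; s, S) dw = f_n(z; m + G(s − A m), P + G(S − A P Aᵀ − Q) Gᵀ). -/

import Mathlib

open MeasureTheory Matrix

/-- Multivariate normal density `f(z; μ, S)` with respect to Lebesgue measure. -/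
noncomputable def mvGaussianPdf {ι : Type*} [Fintype ι] [DecidableEq ι]
    (μ : ι → ℝ) (S : Matrix ι ι ℝ) (z : ι → ℝ) : ℝ :=
  (2 * Real.pi) ^ (-(Fintype.card ι : ℝ) / 2) * S.det ^ (-(1 : ℝ) / 2) *
    Real.exp (-(1 / 2) * ((z - μ) ⬝ᵥ (S⁻¹ *ᵥ (z - μ))))

/-!
With `M = A P Aᵀ + Q`, `G = P Aᵀ M⁻¹` and `C = P - G M Gᵀ`, the integrand is
`f(z; a + G w, C) f(w; s, S)` with `a = m - G A m`. Completing the square in `w`, with the Woodbury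
identity for `(C + G S Gᵀ)⁻¹` and the matrix determinant lemma for `det (C + G S Gᵀ)`, factors it
as `f(z; a + G s, C + G S Gᵀ)` times a Gaussian density in `w` with precision `S⁻¹ + Gᵀ C⁻¹ G`,
which integrates to one. Woodbury also gives `C = (P⁻¹ + Aᵀ Q⁻¹ A)⁻¹`, so `C` is positive definite,
and `C + G S Gᵀ` is the stated covariance.
-/

open Real

theorem Matrix.IsHermitian.transpose_eq_self {ι : Type*} {M : Matrix ι ι ℝ} (hM : M.IsHermitian) :
    Mᵀ = M :=
  (isHermitian_iff_isSymm.mp hM).eq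

section GaussianIntegral

variable {ι : Type*} [Fintype ι]

theorem integral_exp_neg_half_dotProduct_self :
    ∫ y : ι → ℝ, exp (-(1 / 2) * (y ⬝ᵥ y)) = √(2 * π) ^ Fintype.card ι := by
  have hprod (y : ι → ℝ) : exp (-(1 / 2) * (y ⬝ᵥ y)) = ∏ i, exp (-(1 / 2) * y i ^ 2) := by
    simp only [← exp_sum, dotProduct, Finset.mul_sum, sq]
  simp_rw [hprod]
  rw [integral_fintype_prod_volume_eq_pow (fun t : ℝ => exp (-(1 / 2) * t ^ 2))]
  have hgauss := integral_gaussian (1 / 2)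
  simp only [neg_mul] at hgauss ⊢
  rw [hgauss]
  norm_num [div_eq_mul_inv, mul_comm]

variable [DecidableEq ι]

theorem integral_comp_mulVec {E : Type*} [NormedAddCommGroup E] [NormedSpace ℝ E]
    {M : Matrix ι ι ℝ} (hM : M.det ≠ 0) (f : (ι → ℝ) → E) :
    ∫ x, f (M *ᵥ x) = |M.det|⁻¹ • ∫ x, f x := by
  have hemb : MeasurableEmbedding (toLin' M) :=
    ((toLin' M).isClosedEmbedding_of_injective
      (LinearMap.ker_eq_bot.mpr (mulVec_injective_of_det_ne_zero hM))).measurableEmbedding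
  rw [← abs_inv, ← ENNReal.toReal_ofReal (abs_nonneg _), ← integral_smul_measure,
    ← Real.map_matrix_volume_pi_eq_smul_volume_pi hM, hemb.integral_map]
  rfl

theorem dotProduct_mul_transpose_inv_mulVec {R : Matrix ι ι ℝ} (hR : R.det ≠ 0) (y : ι → ℝ) :
    (R *ᵥ y) ⬝ᵥ ((R * Rᵀ)⁻¹ *ᵥ (R *ᵥ y)) = y ⬝ᵥ y := by
  have hRT : IsUnit Rᵀ.det := by rw [det_transpose]; exact hR.isUnit
  rw [Matrix.mul_inv_rev, mulVec_mulVec, Matrix.mul_assoc, nonsing_inv_mul _ hR.isUnit,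
    Matrix.mul_one, dotProduct_comm, dotProduct_mulVec, ← mulVec_transpose, mulVec_mulVec,
    mul_nonsing_inv _ hRT, one_mulVec]

theorem integral_exp_neg_half_inv_quadForm_of_eq_mul_transpose {V R : Matrix ι ι ℝ}
    (hVR : V = R * Rᵀ) (hR : R.det ≠ 0) :
    ∫ w : ι → ℝ, exp (-(1 / 2) * (w ⬝ᵥ (V⁻¹ *ᵥ w))) = |R.det| * √(2 * π) ^ Fintype.card ι := by
  have hsubst := integral_comp_mulVec hR fun w ↦ exp (-(1 / 2) * (w ⬝ᵥ (V⁻¹ *ᵥ w)))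
  simp only [hVR, dotProduct_mul_transpose_inv_mulVec hR,
    integral_exp_neg_half_dotProduct_self, smul_eq_mul] at hsubst
  rw [hVR, hsubst]
  field_simp

open scoped MatrixOrder in
theorem integral_exp_neg_half_inv_quadForm {V : Matrix ι ι ℝ} (hV : V.PosDef) :
    ∫ w : ι → ℝ, exp (-(1 / 2) * (w ⬝ᵥ (V⁻¹ *ᵥ w))) = √V.det * √(2 * π) ^ Fintype.card ι := by
  have hR : (CFC.sqrt V).PosSemidef := (CFC.sqrt_nonneg V).posSemidef
  have hdet : (CFC.sqrt V).det = √V.det := hV.posSemidef.det_sqrt.trans RCLike.sqrt_real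
  rw [integral_exp_neg_half_inv_quadForm_of_eq_mul_transpose (R := CFC.sqrt V), hdet,
    abs_of_nonneg (sqrt_nonneg _)]
  · rw [hR.isHermitian.transpose_eq_self, CFC.sqrt_mul_sqrt_self V hV.posSemidef.nonneg]
  · rw [hdet]; exact (sqrt_pos.mpr hV.det_pos).ne'

theorem integral_mvGaussianPdf (μ : ι → ℝ) {V : Matrix ι ι ℝ} (hV : V.PosDef) :
    ∫ w, mvGaussianPdf μ V w = 1 := by
  have h2π : 0 < √(2 * π) := by positivity
  have hdet : 0 < √V.det := sqrt_pos.mpr hV.det_pos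
  unfold mvGaussianPdf
  rw [integral_const_mul, integral_sub_right_eq_self (fun w ↦ exp (-(1 / 2) * (w ⬝ᵥ (V⁻¹ *ᵥ w)))),
    integral_exp_neg_half_inv_quadForm hV, rpow_div_two_eq_sqrt _ two_pi_pos.le,
    rpow_div_two_eq_sqrt _ hV.det_pos.le, rpow_neg h2π.le, rpow_neg_one, rpow_natCast]
  field_simp

end GaussianIntegral


theorem Matrix.PosSemidef.transpose_mul_mul_same {ι κ : Type*} [Fintype ι] [Fintype κ]
    {M : Matrix ι ι ℝ} (hM : M.PosSemidef) (G : Matrix ι κ ℝ) : (Gᵀ * M * G).PosSemidef := by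
  simpa using hM.conjTranspose_mul_mul_same G

theorem Matrix.PosSemidef.mul_mul_transpose_same {ι κ : Type*} [Fintype ι] [Fintype κ]
    {M : Matrix ι ι ℝ} (hM : M.PosSemidef) (G : Matrix κ ι ℝ) : (G * M * Gᵀ).PosSemidef := by
  simpa using hM.mul_mul_conjTranspose_same G

theorem dotProduct_mulVec_comm_of_transpose_eq {κ : Type*} [Fintype κ] {K : Matrix κ κ ℝ}
    (hK : Kᵀ = K) (x y : κ → ℝ) : x ⬝ᵥ (K *ᵥ y) = y ⬝ᵥ (K *ᵥ x) := by
  rw [← dotProduct_transpose_mulVec, hK]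

theorem Matrix.PosDef.inv_add_transpose_mul_inv_mul {ι κ : Type*} [Fintype ι] [Fintype κ]
    [DecidableEq ι] [DecidableEq κ] {C : Matrix ι ι ℝ} {S : Matrix κ κ ℝ} (hC : C.PosDef)
    (hS : S.PosDef) (G : Matrix ι κ ℝ) : (S⁻¹ + Gᵀ * C⁻¹ * G).PosDef :=
  hS.inv.add_posSemidef (hC.inv.posSemidef.transpose_mul_mul_same G)

section QuadraticForms

variable {ι κ : Type*} [Fintype ι] [Fintype κ] [DecidableEq ι] [DecidableEq κ]

theorem dotProduct_mulVec_completeSquare {K : Matrix κ κ ℝ} (hK : Kᵀ = K) (hKdet : K.det ≠ 0)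
    (u b : κ → ℝ) :
    u ⬝ᵥ (K *ᵥ u) - 2 * (u ⬝ᵥ b) =
      (u - K⁻¹ *ᵥ b) ⬝ᵥ (K *ᵥ (u - K⁻¹ *ᵥ b)) - b ⬝ᵥ (K⁻¹ *ᵥ b) := by
  have hb : K *ᵥ (K⁻¹ *ᵥ b) = b := by rw [mulVec_mulVec, mul_nonsing_inv _ hKdet.isUnit, one_mulVec]
  rw [mulVec_sub, hb, dotProduct_comm b, dotProduct_sub, sub_dotProduct, sub_dotProduct,
    dotProduct_mulVec_comm_of_transpose_eq hK (K⁻¹ *ᵥ b) u, hb]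
  ring

theorem quadForm_sub_mulVec_add_quadForm {C : Matrix ι ι ℝ} {S K : Matrix κ κ ℝ} {G : Matrix ι κ ℝ}
    (hC : C.PosDef) (hS : S.PosDef) (hK : K = S⁻¹ + Gᵀ * C⁻¹ * G) (u : κ → ℝ) (v : ι → ℝ) :
    (v - G *ᵥ u) ⬝ᵥ (C⁻¹ *ᵥ (v - G *ᵥ u)) + u ⬝ᵥ (S⁻¹ *ᵥ u) =
      (u - K⁻¹ *ᵥ (Gᵀ *ᵥ (C⁻¹ *ᵥ v))) ⬝ᵥ (K *ᵥ (u - K⁻¹ *ᵥ (Gᵀ *ᵥ (C⁻¹ *ᵥ v)))) +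
        v ⬝ᵥ ((C + G * S * Gᵀ)⁻¹ *ᵥ v) := by
  have hKpos : K.PosDef := hK ▸ hC.inv_add_transpose_mul_inv_mul hS G
  have hCinv : C⁻¹ᵀ = C⁻¹ := hC.inv.isHermitian.transpose_eq_self
  have hwoodbury : (C + G * S * Gᵀ)⁻¹ = C⁻¹ - C⁻¹ * G * K⁻¹ * Gᵀ * C⁻¹ :=
    hK ▸ add_mul_mul_inv_eq_sub C G S Gᵀ hC.isUnit hS.isUnit (hK ▸ hKpos.isUnit)
  have hGT (x : κ → ℝ) (y : ι → ℝ) : (G *ᵥ x) ⬝ᵥ y = x ⬝ᵥ (Gᵀ *ᵥ y) := by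
    rw [dotProduct_transpose_mulVec, dotProduct_comm]
  have hexpand : (v - G *ᵥ u) ⬝ᵥ (C⁻¹ *ᵥ (v - G *ᵥ u)) + u ⬝ᵥ (S⁻¹ *ᵥ u) =
      u ⬝ᵥ (K *ᵥ u) - 2 * (u ⬝ᵥ (Gᵀ *ᵥ (C⁻¹ *ᵥ v))) + v ⬝ᵥ (C⁻¹ *ᵥ v) := by
    rw [hK, add_mulVec, dotProduct_add, mulVec_sub, dotProduct_sub, sub_dotProduct, sub_dotProduct,
      dotProduct_mulVec_comm_of_transpose_eq hCinv v (G *ᵥ u), hGT, hGT, ← mulVec_mulVec,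
      ← mulVec_mulVec]
    ring
  have hcross : (Gᵀ *ᵥ (C⁻¹ *ᵥ v)) ⬝ᵥ (K⁻¹ *ᵥ (Gᵀ *ᵥ (C⁻¹ *ᵥ v))) =
      v ⬝ᵥ ((C⁻¹ * G * K⁻¹ * Gᵀ * C⁻¹) *ᵥ v) := by
    rw [dotProduct_comm, ← hGT, dotProduct_mulVec_comm_of_transpose_eq hCinv]
    simp only [mulVec_mulVec, Matrix.mul_assoc]
  rw [hexpand, dotProduct_mulVec_completeSquare hKpos.isHermitian.transpose_eq_self
    hKpos.det_pos.ne', hcross, hwoodbury, sub_mulVec, dotProduct_sub]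
  ring

end QuadraticForms

theorem Matrix.det_add_mul_mul_transpose {ι κ α : Type*} [Fintype ι] [Fintype κ] [DecidableEq ι]
    [DecidableEq κ] [CommRing α] {C : Matrix ι ι α} {S : Matrix κ κ α} (hC : IsUnit C.det)
    (hS : IsUnit S.det) (G : Matrix ι κ α) :
    (C + G * S * Gᵀ).det = C.det * S.det * (S⁻¹ + Gᵀ * C⁻¹ * G).det := by
  have hfactor : 1 + S * Gᵀ * C⁻¹ * G = S * (S⁻¹ + Gᵀ * C⁻¹ * G) := by
    rw [Matrix.mul_add, mul_nonsing_inv _ hS, Matrix.mul_assoc S, Matrix.mul_assoc S]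
  rw [Matrix.mul_assoc, det_add_mul G (S * Gᵀ) hC, hfactor, det_mul, mul_assoc]

section GaussianProduct

variable {ι κ : Type*} [Fintype ι] [Fintype κ] [DecidableEq ι] [DecidableEq κ]

theorem mvGaussianPdf_mul_mvGaussianPdf_eq {μ ν z : ι → ℝ} {μ' ν' z' : κ → ℝ}
    {V W : Matrix ι ι ℝ} {V' W' : Matrix κ κ ℝ}
    (hdet : V.det ^ (-(1 : ℝ) / 2) * V'.det ^ (-(1 : ℝ) / 2) =
      W.det ^ (-(1 : ℝ) / 2) * W'.det ^ (-(1 : ℝ) / 2))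
    (hquad : (z - μ) ⬝ᵥ (V⁻¹ *ᵥ (z - μ)) + (z' - μ') ⬝ᵥ (V'⁻¹ *ᵥ (z' - μ')) =
      (z - ν) ⬝ᵥ (W⁻¹ *ᵥ (z - ν)) + (z' - ν') ⬝ᵥ (W'⁻¹ *ᵥ (z' - ν'))) :
    mvGaussianPdf μ V z * mvGaussianPdf μ' V' z' =
      mvGaussianPdf ν W z * mvGaussianPdf ν' W' z' := by
  have hregroup (a b c d e f : ℝ) : a * b * c * (d * e * f) = a * d * (b * e) * (c * f) := by ring
  unfold mvGaussianPdf
  rw [hregroup, hregroup, hdet, ← exp_add, ← exp_add]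
  congr 2
  linear_combination (-(1 / 2)) * hquad

theorem mvGaussianPdf_mul_mvGaussianPdf {C : Matrix ι ι ℝ} {S K : Matrix κ κ ℝ}
    {G : Matrix ι κ ℝ} (hC : C.PosDef) (hS : S.PosDef) (hK : K = S⁻¹ + Gᵀ * C⁻¹ * G)
    (a z : ι → ℝ) (s w : κ → ℝ) :
    mvGaussianPdf (a + G *ᵥ w) C z * mvGaussianPdf s S w =
      mvGaussianPdf (a + G *ᵥ s) (C + G * S * Gᵀ) z *
        mvGaussianPdf (s + K⁻¹ *ᵥ (Gᵀ *ᵥ (C⁻¹ *ᵥ (z - (a + G *ᵥ s))))) K⁻¹ w := by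
  have hKpos : K.PosDef := hK ▸ hC.inv_add_transpose_mul_inv_mul hS G
  apply mvGaussianPdf_mul_mvGaussianPdf_eq
  · have hk : 0 < K.det ^ (-(1 : ℝ) / 2) := rpow_pos_of_pos hKpos.det_pos _
    rw [det_add_mul_mul_transpose hC.det_pos.ne'.isUnit hS.det_pos.ne'.isUnit, ← hK,
      det_nonsing_inv, Ring.inverse_eq_inv',
      mul_rpow (mul_pos hC.det_pos hS.det_pos).le hKpos.det_pos.le, inv_rpow hKpos.det_pos.le,
      mul_inv_cancel_right₀ hk.ne', mul_rpow hC.det_pos.le hS.det_pos.le]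
  · have hz : z - (a + G *ᵥ w) = (z - (a + G *ᵥ s)) - G *ᵥ (w - s) := by rw [mulVec_sub]; abel
    have hw : w - (s + K⁻¹ *ᵥ (Gᵀ *ᵥ (C⁻¹ *ᵥ (z - (a + G *ᵥ s))))) =
        (w - s) - K⁻¹ *ᵥ (Gᵀ *ᵥ (C⁻¹ *ᵥ (z - (a + G *ᵥ s)))) := by abel
    rw [hz, hw, nonsing_inv_nonsing_inv _ hKpos.det_pos.ne'.isUnit,
      quadForm_sub_mulVec_add_quadForm hC hS hK, add_comm]

theorem integral_mvGaussianPdf_mul_mvGaussianPdf {C : Matrix ι ι ℝ} {S : Matrix κ κ ℝ}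
    (hC : C.PosDef) (hS : S.PosDef) (G : Matrix ι κ ℝ) (a z : ι → ℝ) (s : κ → ℝ) :
    ∫ w, mvGaussianPdf (a + G *ᵥ w) C z * mvGaussianPdf s S w =
      mvGaussianPdf (a + G *ᵥ s) (C + G * S * Gᵀ) z := by
  simp_rw [mvGaussianPdf_mul_mvGaussianPdf hC hS rfl a z s]
  rw [integral_const_mul, integral_mvGaussianPdf _ (hC.inv_add_transpose_mul_inv_mul hS G).inv,
    mul_one]

end GaussianProduct

theorem Matrix.sub_gain_mul_mul_transpose_eq_inv {ι κ : Type*} [Fintype ι] [Fintype κ]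
    [DecidableEq ι] [DecidableEq κ] {P : Matrix ι ι ℝ} {Q : Matrix κ κ ℝ} (hP : P.PosDef)
    (hQ : Q.PosDef) (A : Matrix κ ι ℝ) :
    P - (P * Aᵀ * (A * P * Aᵀ + Q)⁻¹) * (A * P * Aᵀ + Q) * (P * Aᵀ * (A * P * Aᵀ + Q)⁻¹)ᵀ =
      (P⁻¹ + Aᵀ * Q⁻¹ * A)⁻¹ := by
  have hM : (A * P * Aᵀ + Q).PosDef := .posSemidef_add (hP.posSemidef.mul_mul_transpose_same A) hQ
  have hPP : P⁻¹⁻¹ = P := nonsing_inv_nonsing_inv _ hP.det_pos.ne'.isUnit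
  have hQQ : Q⁻¹⁻¹ = Q := nonsing_inv_nonsing_inv _ hQ.det_pos.ne'.isUnit
  have hwoodbury := add_mul_mul_inv_eq_sub P⁻¹ Aᵀ Q⁻¹ A hP.inv.isUnit hQ.inv.isUnit
    (by rw [hPP, hQQ, add_comm]; exact hM.isUnit)
  rw [hwoodbury, hPP, hQQ, add_comm Q, transpose_mul, transpose_mul,
    hM.inv.isHermitian.transpose_eq_self, hP.isHermitian.transpose_eq_self, transpose_transpose,
    Matrix.mul_assoc _ (A * P * Aᵀ + Q), mul_nonsing_inv_cancel_left _ _ hM.det_pos.ne'.isUnit]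
  simp only [Matrix.mul_assoc]

theorem stmt14 {n : ℕ} (P Q : Matrix (Fin n) (Fin n) ℝ) (hP : P.PosDef) (hQ : Q.PosDef)
    (A : Matrix (Fin n) (Fin n) ℝ) (S : Matrix (Fin n) (Fin n) ℝ) (hS : S.PosDef) :
    (P - (P * Aᵀ * (A * P * Aᵀ + Q)⁻¹) * (A * P * Aᵀ + Q) * (P * Aᵀ * (A * P * Aᵀ + Q)⁻¹)ᵀ).PosDef ∧
      ∀ (m s z : Fin n → ℝ),
        ∫ w : Fin n → ℝ,
            mvGaussianPdf (m + (P * Aᵀ * (A * P * Aᵀ + Q)⁻¹) *ᵥ (w - A *ᵥ m))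
              (P - (P * Aᵀ * (A * P * Aᵀ + Q)⁻¹) * (A * P * Aᵀ + Q) *
                (P * Aᵀ * (A * P * Aᵀ + Q)⁻¹)ᵀ) z *
              mvGaussianPdf s S w =
          mvGaussianPdf (m + (P * Aᵀ * (A * P * Aᵀ + Q)⁻¹) *ᵥ (s - A *ᵥ m))
            (P + (P * Aᵀ * (A * P * Aᵀ + Q)⁻¹) * (S - A * P * Aᵀ - Q) *
              (P * Aᵀ * (A * P * Aᵀ + Q)⁻¹)ᵀ) z := by
  have hC := sub_gain_mul_mul_transpose_eq_inv hP hQ A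
  set M := A * P * Aᵀ + Q with hM
  set G := P * Aᵀ * M⁻¹
  have hCpos : (P - G * M * Gᵀ).PosDef := hC ▸ (hQ.inv_add_transpose_mul_inv_mul hP A).inv
  refine ⟨hCpos, fun m s z => ?_⟩
  have hmean (w : Fin n → ℝ) : m + G *ᵥ (w - A *ᵥ m) = (m - G *ᵥ (A *ᵥ m)) + G *ᵥ w := by
    rw [mulVec_sub]; abel
  have hcov : P + G * (S - A * P * Aᵀ - Q) * Gᵀ = (P - G * M * Gᵀ) + G * S * Gᵀ := by
    rw [hM]; noncomm_ring
  simp_rw [hmean, hcov]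
  exact integral_mvGaussianPdf_mul_mvGaussianPdf hCpos hS G (m - G *ᵥ (A *ᵥ m)) z s
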